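/- Let r ≥ 2, s ≥ 0, t ≥ 0 be integers with s + t ≥ 1. Let G be any simple graph with r vertices and let C(G) be the cone over G, obtained by adding a new vertex adjacent to all vertices of G. Then λ_min(S(C(G)(s,t))) ≤ λ_min(S(K_{1,r}(s,t))). -/

import Mathlib

open Matrix

/-- A Seidel matrix: symmetric, zero diagonal, off-diagonal entries `±1`. -/
def IsSeidel {n : ℕ} (S : Matrix (Fin n) (Fin n) ℝ) : Prop :=
  S.IsSymm ∧ (∀ i, S i i = 0) ∧ ∀ i j, i ≠ j → S i j = 1 ∨ S i j = -1

/-- Smallest eigenvalue of a real symmetric matrix (junk value `0` if not Hermitian). -/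
noncomputable def minEig {m : Type*} [Fintype m] [DecidableEq m] (A : Matrix m m ℝ) : ℝ := by
  classical
  exact if hA : A.IsHermitian then ⨅ i, hA.eigenvalues i else 0

/-- Largest eigenvalue of a real symmetric matrix (junk value `0` if not Hermitian). -/
noncomputable def maxEig {m : Type*} [Fintype m] [DecidableEq m] (A : Matrix m m ℝ) : ℝ := by
  classical
  exact if hA : A.IsHermitian then ⨆ i, hA.eigenvalues i else 0

/-- The Seidel matrix of a simple graph `G`, i.e. `J - I - 2A(G)`:
zero diagonal, `-1` on adjacent pairs, `1` on distinct non-adjacent pairs. -/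
noncomputable def seidelOf {V : Type*} [Fintype V] (G : SimpleGraph V) : Matrix V V ℝ := by
  classical
  exact Matrix.of fun i j => if i = j then 0 else if G.Adj i j then -1 else 1

/-- Smallest eigenvalue of the Seidel matrix of a finite graph. -/
noncomputable def minSeidelEig {V : Type*} [Finite V] (G : SimpleGraph V) : ℝ := by
  classical
  letI := Fintype.ofFinite V
  exact minEig (seidelOf G)

/-- Spectral radius (largest adjacency eigenvalue) of a finite graph. -/
noncomputable def specRad {V : Type*} [Finite V] (G : SimpleGraph V) : ℝ := by
  classical
  letI := Fintype.ofFinite V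
  exact maxEig (G.adjMatrix ℝ)

/-- Switching equivalence: `T = D S D` for some diagonal `±1` matrix `D`. -/
def SwEquiv {n : ℕ} (S T : Matrix (Fin n) (Fin n) ℝ) : Prop :=
  ∃ ε : Fin n → ℝ, (∀ i, ε i = 1 ∨ ε i = -1) ∧
    T = Matrix.diagonal ε * S * Matrix.diagonal ε

/-- The switching graph of a Seidel matrix `S`: the graph on `2n` vertices whose Seidel
matrix is the block matrix `((S, I - S), (I - S, S))`, adjacency given by entries `-1`. -/
def switchGraph {n : ℕ} (S : Matrix (Fin n) (Fin n) ℝ) : SimpleGraph (Fin n ⊕ Fin n) :=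
  SimpleGraph.fromRel fun x y => Matrix.fromBlocks S (1 - S) (1 - S) S x y = -1

/-- Independence number of a graph. -/
noncomputable def indepNum {V : Type*} (G : SimpleGraph V) : ℕ := Gᶜ.cliqueNum

/-- The graph consisting of `t` disjoint copies of `K₂`. -/
def nK2 (t : ℕ) : SimpleGraph (Fin t × Fin 2) :=
  SimpleGraph.fromRel fun p q => p.1 = q.1

/-- The cone over a graph `G`: a new vertex joined to every vertex of `G`. -/
def coneG {V : Type*} (G : SimpleGraph V) : SimpleGraph (Unit ⊕ V) :=
  SimpleGraph.fromRel fun x y =>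
    (∃ v, x = Sum.inl () ∧ y = Sum.inr v) ∨
    (∃ u v, G.Adj u v ∧ x = Sum.inr u ∧ y = Sum.inr v)

/-!
For any graph `H`, let `S` and `S'` be the Seidel matrices of `C(G) ⊕ H` and `K_{1,r} ⊕ H`.
Any vector `x` splits as `x = w + u`, where `u` is the deviation of `x` from its mean on the `r`
base vertices of the cone and `w` is constant on them. The base is an independent set of the
star that every other vertex sees uniformly, so `S' u = -u`. The matrices `S` and `S'` differ
only on base–base entries, where `S ≤ S'` and `w` is constant, so `wᵀ S w ≤ wᵀ S' w`. Finally
`λ_min(S) ≤ -1` because `C(G)` has an edge, hence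
`xᵀ S' x = wᵀ S' w - |u|² ≥ λ_min(S) (|w|² + |u|²) = λ_min(S) |x|²`.
-/

lemma transpose_star_of_real {n : Type*} (U : Matrix n n ℝ) : (star U)ᵀ = U := by
  rw [star_eq_conjTranspose, conjTranspose_eq_transpose_of_trivial, transpose_transpose]

section MinEig

variable {n : Type*} [Fintype n] [DecidableEq n] {A : Matrix n n ℝ}

lemma minEig_le_eigenvalues (hA : A.IsHermitian) (i : n) : minEig A ≤ hA.eigenvalues i := by
  rw [minEig, dif_pos hA]
  exact ciInf_le (Set.finite_range _).bddBelow i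

lemma le_minEig_iff [Nonempty n] (hA : A.IsHermitian) {c : ℝ} :
    c ≤ minEig A ↔ ∀ i, c ≤ hA.eigenvalues i := by
  rw [minEig, dif_pos hA, le_ciInf_iff (Set.finite_range _).bddBelow]

lemma Matrix.IsHermitian.dotProduct_mulVec_eq_sum (hA : A.IsHermitian) (x : n → ℝ) :
    x ⬝ᵥ A *ᵥ x =
      ∑ i, hA.eigenvalues i * ((star (hA.eigenvectorUnitary : Matrix n n ℝ) *ᵥ x) i) ^ 2 := by
  set U : Matrix n n ℝ := ↑hA.eigenvectorUnitary
  conv_lhs => rw [hA.spectral_theorem, Unitary.conjStarAlgAut_apply, Matrix.mul_assoc,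
    ← mulVec_mulVec, dotProduct_mulVec x U, ← mulVec_mulVec, ← transpose_star_of_real U,
    vecMul_transpose]
  simp only [dotProduct, mulVec_diagonal, Function.comp_apply, RCLike.ofReal_real_eq_id, id]
  exact Finset.sum_congr rfl fun i _ => by ring

lemma Matrix.IsHermitian.dotProduct_self_eq_sum (hA : A.IsHermitian) (x : n → ℝ) :
    x ⬝ᵥ x = ∑ i, ((star (hA.eigenvectorUnitary : Matrix n n ℝ) *ᵥ x) i) ^ 2 := by
  set U : Matrix n n ℝ := ↑hA.eigenvectorUnitary
  have hU : U * star U = 1 := Matrix.mem_unitaryGroup_iff.mp hA.eigenvectorUnitary.2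
  simp only [sq]
  rw [← dotProduct, dotProduct_mulVec, vecMul_mulVec, transpose_star_of_real, hU, vecMul_one]

theorem minEig_mul_dotProduct_self_le (hA : A.IsHermitian) (x : n → ℝ) :
    minEig A * (x ⬝ᵥ x) ≤ x ⬝ᵥ A *ᵥ x := by
  rw [hA.dotProduct_mulVec_eq_sum, hA.dotProduct_self_eq_sum, Finset.mul_sum]
  exact Finset.sum_le_sum fun i _ =>
    mul_le_mul_of_nonneg_right (minEig_le_eigenvalues hA i) (sq_nonneg _)

theorem le_minEig_of_forall [Nonempty n] (hA : A.IsHermitian) {c : ℝ}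
    (h : ∀ x : n → ℝ, c * (x ⬝ᵥ x) ≤ x ⬝ᵥ A *ᵥ x) : c ≤ minEig A := by
  rw [le_minEig_iff hA]
  intro i
  set v : n → ℝ := ⇑(hA.eigenvectorBasis i)
  have hv : v ⬝ᵥ v = 1 := by
    have h1 := real_inner_self_eq_norm_sq (hA.eigenvectorBasis i)
    rw [hA.eigenvectorBasis.orthonormal.1 i, EuclideanSpace.inner_eq_star_dotProduct] at h1
    simpa [v] using h1
  simpa [hv, hA.eigenvalues_eq i] using h v

theorem minEig_le_of_dotProduct_mulVec_le (hA : A.IsHermitian) {x : n → ℝ} {c : ℝ}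
    (hx : 0 < x ⬝ᵥ x) (h : x ⬝ᵥ A *ᵥ x ≤ c * (x ⬝ᵥ x)) : minEig A ≤ c :=
  le_of_mul_le_mul_right ((minEig_mul_dotProduct_self_le hA x).trans h) hx

theorem minEig_le_minEig_of_forall_split [Nonempty n] {B : Matrix n n ℝ} (hA : A.IsHermitian)
    (hB : B.IsHermitian) {μ : ℝ} (hμ : minEig A ≤ μ)
    (hsplit : ∀ x : n → ℝ, ∃ w u, x = w + u ∧ w ⬝ᵥ u = 0 ∧ B *ᵥ u = μ • u ∧
      w ⬝ᵥ A *ᵥ w ≤ w ⬝ᵥ B *ᵥ w) :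
    minEig A ≤ minEig B := by
  refine le_minEig_of_forall hB fun x => ?_
  obtain ⟨w, u, rfl, hwu, hBu, hAB⟩ := hsplit x
  have huw : u ⬝ᵥ w = 0 := by rw [dotProduct_comm, hwu]
  have hBuw : u ⬝ᵥ B *ᵥ w = 0 := by
    rw [dotProduct_mulVec, ← mulVec_transpose, (isHermitian_iff_isSymm.mp hB).eq, hBu,
      smul_dotProduct, huw, smul_zero]
  have huu : minEig A * (u ⬝ᵥ u) ≤ μ * (u ⬝ᵥ u) :=
    mul_le_mul_of_nonneg_right hμ (Finset.sum_nonneg fun i _ => mul_self_nonneg (u i))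
  have hww := minEig_mul_dotProduct_self_le hA w
  calc minEig A * ((w + u) ⬝ᵥ (w + u))
      = minEig A * (w ⬝ᵥ w) + minEig A * (u ⬝ᵥ u) := by
        rw [dotProduct_add, add_dotProduct, add_dotProduct, hwu, huw]; ring
    _ ≤ w ⬝ᵥ B *ᵥ w + μ * (u ⬝ᵥ u) := by linarith
    _ = (w + u) ⬝ᵥ B *ᵥ (w + u) := by
        rw [mulVec_add, dotProduct_add, add_dotProduct, add_dotProduct, hBuw, hBu,
          dotProduct_smul, dotProduct_smul, hwu, smul_eq_mul, smul_eq_mul]; ring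

omit [DecidableEq n] in
theorem dotProduct_mulVec_le_of_apply_le {B : Matrix n n ℝ} {y : n → ℝ}
    (hle : ∀ i j, A i j ≤ B i j) (hy : ∀ i j, A i j ≠ B i j → 0 ≤ y i * y j) :
    y ⬝ᵥ A *ᵥ y ≤ y ⬝ᵥ B *ᵥ y := by
  have expand (M : Matrix n n ℝ) : y ⬝ᵥ M *ᵥ y = ∑ i, ∑ j, M i j * (y i * y j) := by
    simp only [dotProduct, mulVec, Finset.mul_sum]
    exact Finset.sum_congr rfl fun i _ => Finset.sum_congr rfl fun j _ => by ring
  rw [expand, expand]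
  refine Finset.sum_le_sum fun i _ => Finset.sum_le_sum fun j _ => ?_
  by_cases h : A i j = B i j
  · rw [h]
  · exact mul_le_mul_of_nonneg_right (hle i j) (hy i j h)

end MinEig

section Seidel

variable {V : Type*} [Fintype V] {Γ Γ' : SimpleGraph V} {i j : V}

lemma seidelOf_apply_self (Γ : SimpleGraph V) (i : V) : seidelOf Γ i i = 0 := by
  simp [seidelOf]

lemma seidelOf_apply_of_adj (h : Γ.Adj i j) : seidelOf Γ i j = -1 := by
  simp [seidelOf, h, h.ne]

lemma seidelOf_apply_of_not_adj (hij : i ≠ j) (h : ¬Γ.Adj i j) : seidelOf Γ i j = 1 := by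
  simp [seidelOf, h, hij]

lemma seidelOf_apply_congr (h : Γ.Adj i j ↔ Γ'.Adj i j) : seidelOf Γ i j = seidelOf Γ' i j := by
  simp only [seidelOf, of_apply]
  split_ifs <;> simp_all

lemma seidelOf_apply_anti (h : Γ ≤ Γ') (i j : V) : seidelOf Γ' i j ≤ seidelOf Γ i j := by
  by_cases hij : i = j
  · subst hij; simp [seidelOf_apply_self]
  by_cases h' : Γ'.Adj i j
  · by_cases hΓ : Γ.Adj i j
    · simp [seidelOf_apply_of_adj, h', hΓ]
    · rw [seidelOf_apply_of_adj h', seidelOf_apply_of_not_adj hij hΓ]; norm_num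
  · rw [seidelOf_apply_of_not_adj hij h', seidelOf_apply_of_not_adj hij fun hΓ => h' (h hΓ)]

lemma seidelOf_isHermitian (Γ : SimpleGraph V) : (seidelOf Γ).IsHermitian := by
  refine isHermitian_iff_isSymm.mpr (IsSymm.ext fun i j => ?_)
  simp only [seidelOf, of_apply]
  split_ifs <;> simp_all [eq_comm, SimpleGraph.adj_comm]

lemma minSeidelEig_eq [DecidableEq V] (Γ : SimpleGraph V) :
    minSeidelEig Γ = minEig (seidelOf Γ) := by
  unfold minSeidelEig
  congr!

theorem minEig_seidelOf_le_neg_one [DecidableEq V] (h : Γ.Adj i j) :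
    minEig (seidelOf Γ) ≤ -1 := by
  set x : V → ℝ := Pi.single i 1 + Pi.single j 1
  have hxx : x ⬝ᵥ x = 2 := by
    simp [x, h.ne, h.ne.symm, one_add_one_eq_two]
  have hxSx : x ⬝ᵥ seidelOf Γ *ᵥ x = -2 := by
    simp only [x, mulVec_add, mulVec_single, dotProduct_add, add_dotProduct, single_dotProduct]
    norm_num [seidelOf_apply_self, seidelOf_apply_of_adj h, seidelOf_apply_of_adj h.symm]
  exact minEig_le_of_dotProduct_mulVec_le (seidelOf_isHermitian Γ) (x := x) (by norm_num [hxx])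
    (by rw [hxx, hxSx]; norm_num)

end Seidel

section Cone

variable {V W : Type*} {G : SimpleGraph V} {H : SimpleGraph W}

lemma coneG_sum_adj_iff {x y : (Unit ⊕ V) ⊕ W} :
    (coneG G ⊕g H).Adj x y ↔
      (coneG ⊥ ⊕g H).Adj x y ∨ ∃ u v, G.Adj u v ∧ x = .inl (.inr u) ∧ y = .inl (.inr v) := by
  rcases x with ((_ | u) | z) <;> rcases y with ((_ | v) | z') <;> simp [coneG]
  all_goals exact ⟨fun h => h.2.elim id SimpleGraph.Adj.symm, fun h => ⟨h.ne, .inl h⟩⟩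

lemma coneG_bot_sum_le : coneG ⊥ ⊕g H ≤ coneG G ⊕g H :=
  fun _ _ h => coneG_sum_adj_iff.mpr (Or.inl h)

variable [Fintype V] [Fintype W]

lemma exists_eq_inl_inr_of_seidelOf_coneG_sum_ne {x y : (Unit ⊕ V) ⊕ W}
    (h : seidelOf (coneG G ⊕g H) x y ≠ seidelOf (coneG ⊥ ⊕g H) x y) :
    ∃ u v, x = .inl (.inr u) ∧ y = .inl (.inr v) := by
  by_contra! hxy
  refine h (seidelOf_apply_congr (coneG_sum_adj_iff.trans (or_iff_left ?_)))
  rintro ⟨u, v, -, rfl, rfl⟩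
  exact hxy u v rfl rfl

def leafVec (f : V → ℝ) : (Unit ⊕ V) ⊕ W → ℝ := Sum.elim (Sum.elim 0 f) 0

lemma dotProduct_leafVec (y : (Unit ⊕ V) ⊕ W → ℝ) (f : V → ℝ) :
    y ⬝ᵥ leafVec f = ∑ v, y (.inl (.inr v)) * f v := by
  simp [dotProduct, leafVec, Fintype.sum_sum_type]

lemma seidelOf_coneG_bot_sum_mulVec_leafVec [DecidableEq V] (H : SimpleGraph W) {f : V → ℝ}
    (hf : ∑ v, f v = 0) :
    seidelOf (coneG ⊥ ⊕g H) *ᵥ leafVec f = -leafVec f := by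
  funext x
  rw [mulVec, dotProduct_leafVec]
  rcases x with ((_ | w) | z)
  · have hS (v : V) : seidelOf (coneG ⊥ ⊕g H) (.inl (.inl ())) (.inl (.inr v)) = -1 :=
      seidelOf_apply_of_adj (by simp [coneG])
    simp [hS, hf, leafVec]
  · have hS (v : V) : seidelOf (coneG ⊥ ⊕g H) (.inl (.inr w)) (.inl (.inr v)) * f v =
        f v - if v = w then f v else 0 := by
      by_cases hvw : v = w
      · simp [hvw, seidelOf_apply_self]
      · rw [seidelOf_apply_of_not_adj (by simpa [eq_comm] using hvw) (by simp [coneG])]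
        simp [hvw]
    simp [hS, Finset.sum_sub_distrib, hf, leafVec]
  · have hS (v : V) : seidelOf (coneG ⊥ ⊕g H) (.inr z) (.inl (.inr v)) = 1 :=
      seidelOf_apply_of_not_adj (by simp) (by simp)
    simp [hS, hf, leafVec]

theorem minSeidelEig_coneG_sum_le [Nonempty V] (G : SimpleGraph V) (H : SimpleGraph W) :
    minSeidelEig (coneG G ⊕g H) ≤ minSeidelEig (coneG (⊥ : SimpleGraph V) ⊕g H) := by
  classical
  obtain ⟨v₀⟩ := ‹Nonempty V›
  have hedge : (coneG G ⊕g H).Adj (.inl (.inl ())) (.inl (.inr v₀)) := by simp [coneG]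
  rw [minSeidelEig_eq, minSeidelEig_eq]
  refine minEig_le_minEig_of_forall_split (seidelOf_isHermitian _) (seidelOf_isHermitian _)
    (minEig_seidelOf_le_neg_one hedge) fun x => ?_
  set c := (∑ v, x (.inl (.inr v))) / Fintype.card V
  set f : V → ℝ := fun v => x (.inl (.inr v)) - c
  have hf : ∑ v, f v = 0 := by
    simp only [f, Finset.sum_sub_distrib, Finset.sum_const, Finset.card_univ, nsmul_eq_mul, c]
    field_simp
    ring
  have hw (v : V) : (x - leafVec f : (Unit ⊕ V) ⊕ W → ℝ) (.inl (.inr v)) = c := by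
    simp [leafVec, f]
  refine ⟨x - leafVec f, leafVec f, (sub_add_cancel _ _).symm, ?_, ?_, ?_⟩
  · simp only [dotProduct_leafVec, hw, ← Finset.mul_sum, hf, mul_zero]
  · rw [seidelOf_coneG_bot_sum_mulVec_leafVec H hf, neg_one_smul]
  · refine dotProduct_mulVec_le_of_apply_le (seidelOf_apply_anti coneG_bot_sum_le)
      fun a b hab => ?_
    obtain ⟨u, v, rfl, rfl⟩ := exists_eq_inl_inr_of_seidelOf_coneG_sum_ne hab
    rw [hw, hw]
    exact mul_self_nonneg c

end Cone

theorem stmt_13_general (r s t : ℕ) (hr : 2 ≤ r) (G : SimpleGraph (Fin r)) :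
    minSeidelEig (coneG G ⊕g ((⊥ : SimpleGraph (Fin s)) ⊕g nK2 t)) ≤
      minSeidelEig (coneG (⊥ : SimpleGraph (Fin r)) ⊕g ((⊥ : SimpleGraph (Fin s)) ⊕g nK2 t)) :=
  have : Nonempty (Fin r) := ⟨⟨0, by omega⟩⟩
  minSeidelEig_coneG_sum_le G _

/-- For integers `r ≥ 2`, `s, t ≥ 0` with `s + t ≥ 1` and any graph `G` on `r`
vertices, `λ_min(S(C(G)(s,t))) ≤ λ_min(S(K_{1,r}(s,t)))`, where `K_{1,r}` is the cone over
the empty graph on `r` vertices. -/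
theorem stmt_13 (r s t : ℕ) (hr : 2 ≤ r) (hst : 1 ≤ s + t) (G : SimpleGraph (Fin r)) :
    minSeidelEig (coneG G ⊕g ((⊥ : SimpleGraph (Fin s)) ⊕g nK2 t)) ≤
      minSeidelEig (coneG (⊥ : SimpleGraph (Fin r)) ⊕g ((⊥ : SimpleGraph (Fin s)) ⊕g nK2 t)) :=
  stmt_13_general r s t hr G
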